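/- arXiv:2403.00186 — 2 statements merged into one kernel-verified Lean document; each statement's English description precedes it below -/
import Mathlib

section
/- Let f be a strictly positive continuous probability density on ℝ with CDF F bijective onto (0,1), and let K be a kernel with supp(K) = [-1,1] and K ∈ L¹. Suppose b : ℝ → ℝ is bounded on the compact interval I := [F⁻¹((1-κ)F(-Δ)), F⁻¹(κ+(1-κ)F(Δ))] for Δ > 0, κ ∈ (0,1). Then for every x ∈ [-Δ,Δ] and h ∈ (0, κ(F(-Δ) ∧ (1-F(Δ)))], ∫_ℝ |K_h(F(z) - F(x))| b(z)² f(z) dz ≤ (sup_{z∈I} |b(z)|)² ‖K‖₁. -/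
/-!
Where `z ↦ K_h(F z - F x)` is nonzero we have `|F z - F x| ≤ h`, and the constraint on `h`
keeps `F z` inside `[(1 - κ) F(-Δ), κ + (1 - κ) F(Δ)]`; hence `z ∈ I` and `b(z)² ≤ M²` there.
What remains, `∫ |K_h(F z - F x)| f(z) dz`, becomes `∫_{(0,1)} |K_h(t - F x)| dt ≤ ‖K‖₁` after
the substitution `t = F z`, `dt = f(z) dz`.
-/

open MeasureTheory Set

theorem hasDerivAt_integral_Iic {E : Type*} [NormedAddCommGroup E] [NormedSpace ℝ E]
    [CompleteSpace E] {f : ℝ → E} (hf : Integrable f) {t : ℝ} (ht : ContinuousAt f t) :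
    HasDerivAt (fun x => ∫ z in Iic x, f z) (f t) t := by
  have hsplit :
      (fun x => ∫ z in Iic x, f z) = fun x => (∫ z in Iic 0, f z) + ∫ z in 0..x, f z := by
    funext x
    rw [← intervalIntegral.integral_Iic_sub_Iic hf.integrableOn hf.integrableOn]
    abel
  rw [hsplit]
  exact (intervalIntegral.integral_hasDerivAt_right hf.intervalIntegrable
    hf.aestronglyMeasurable.stronglyMeasurableAtFilter ht).const_add _

theorem integral_inv_mul_comp_sub_div (g : ℝ → ℝ) {h : ℝ} (hh : 0 < h) (c : ℝ) :
    ∫ t, h⁻¹ * g ((t - c) / h) = ∫ u, g u := by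
  rw [integral_const_mul, integral_sub_right_eq_self (fun s => g (s / h)),
    Measure.integral_comp_div, smul_eq_mul, abs_of_pos hh, inv_mul_cancel_left₀ hh.ne']

theorem integrable_comp_mul_deriv {F f g : ℝ → ℝ} (hF : ∀ z, HasDerivAt F (f z) z)
    (hF_inj : Function.Injective F) (hf : ∀ z, 0 ≤ f z) (hg : Integrable g) :
    Integrable fun z => g (F z) * f z := by
  have h := (integrableOn_image_iff_integrableOn_abs_deriv_smul MeasurableSet.univ
    (fun z _ => (hF z).hasDerivWithinAt) hF_inj.injOn g).mp hg.integrableOn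
  simpa only [integrableOn_univ, abs_of_nonneg (hf _), smul_eq_mul, mul_comm] using h

theorem integral_comp_mul_deriv_le {F f g : ℝ → ℝ} (hF : ∀ z, HasDerivAt F (f z) z)
    (hF_inj : Function.Injective F) (hf : ∀ z, 0 ≤ f z) (hg : Integrable g)
    (hg_nonneg : ∀ t, 0 ≤ g t) :
    ∫ z, g (F z) * f z ≤ ∫ t, g t := by
  have h := integral_image_eq_integral_abs_deriv_smul MeasurableSet.univ
    (fun z _ => (hF z).hasDerivWithinAt) hF_inj.injOn g
  simp only [setIntegral_univ, abs_of_nonneg (hf _), smul_eq_mul, mul_comm (f _)] at h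
  rw [← h]
  exact setIntegral_le_integral hg (Filter.Eventually.of_forall hg_nonneg)

theorem integral_mul_sq_mul_le {φ w b : ℝ → ℝ} {M : ℝ} (hφ : ∀ z, 0 ≤ φ z) (hw : ∀ z, 0 ≤ w z)
    (hint : Integrable fun z => φ z * w z) (hb : ∀ z, φ z ≠ 0 → |b z| ≤ M) :
    ∫ z, φ z * b z ^ 2 * w z ≤ M ^ 2 * ∫ z, φ z * w z := by
  rw [← integral_const_mul]
  refine integral_mono_of_nonneg (Filter.Eventually.of_forall fun z =>
    mul_nonneg (mul_nonneg (hφ z) (sq_nonneg _)) (hw z))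
    (hint.const_mul _) (Filter.Eventually.of_forall fun z => ?_)
  rcases eq_or_ne (φ z) 0 with hz | hz
  · simp [hz]
  · have hb2 : b z ^ 2 ≤ M ^ 2 := sq_abs (b z) ▸ pow_le_pow_left₀ (abs_nonneg _) (hb z hz) 2
    calc φ z * b z ^ 2 * w z = b z ^ 2 * (φ z * w z) := by ring
      _ ≤ M ^ 2 * (φ z * w z) := by gcongr; exact mul_nonneg (hφ z) (hw z)

theorem abs_le_of_comp_div_ne_zero {K : ℝ → ℝ} (hK : ∀ u, u ∉ Icc (-1 : ℝ) 1 → K u = 0)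
    {h u : ℝ} (hh : 0 < h) (hu : K (u / h) ≠ 0) : |u| ≤ h := by
  have hmem : u / h ∈ Icc (-1 : ℝ) 1 := by_contra fun hc => hu (hK _ hc)
  rwa [mem_Icc, ← abs_le, abs_div, abs_of_pos hh, div_le_one hh] at hmem

theorem mem_Icc_of_abs_sub_le {κ p q y y' h : ℝ} (hκ : 0 ≤ κ) (hy : y ∈ Icc p q)
    (hh : h ≤ κ * min p (1 - q)) (hy' : |y' - y| ≤ h) :
    y' ∈ Icc ((1 - κ) * p) (κ + (1 - κ) * q) := by
  have hp : κ * min p (1 - q) ≤ κ * p := mul_le_mul_of_nonneg_left (min_le_left _ _) hκ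
  have hq : κ * min p (1 - q) ≤ κ * (1 - q) := mul_le_mul_of_nonneg_left (min_le_right _ _) hκ
  obtain ⟨hy'₁, hy'₂⟩ := abs_le.mp hy'
  constructor <;> nlinarith [hy.1, hy.2]

theorem one_sub_mul_mem_Ioo {κ p : ℝ} (hκ : κ ∈ Ico (0 : ℝ) 1) (hp : p ∈ Ioo (0 : ℝ) 1) :
    (1 - κ) * p ∈ Ioo (0 : ℝ) 1 := by
  obtain ⟨hκ₀, hκ₁⟩ := hκ
  constructor <;> nlinarith [hp.1, hp.2]

theorem add_one_sub_mul_mem_Ioo {κ q : ℝ} (hκ : κ ∈ Ico (0 : ℝ) 1) (hq : q ∈ Ioo (0 : ℝ) 1) :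
    κ + (1 - κ) * q ∈ Ioo (0 : ℝ) 1 := by
  obtain ⟨hκ₀, hκ₁⟩ := hκ
  constructor <;> nlinarith [hq.1, hq.2]

theorem StrictMono.mem_Icc_of_apply_mem_Icc {F Finv : ℝ → ℝ} (hF : StrictMono F) {a b z : ℝ}
    (ha : F (Finv a) = a) (hb : F (Finv b) = b) (hz : F z ∈ Icc a b) :
    z ∈ Icc (Finv a) (Finv b) :=
  ⟨hF.le_iff_le.mp (by rw [ha]; exact hz.1), hF.le_iff_le.mp (by rw [hb]; exact hz.2)⟩

theorem warped_weighted_L1_bound_general (f K F Finv b : ℝ → ℝ) (Δ κ M : ℝ)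
    (hf_pos : ∀ x, 0 < f x) (hf_cont : Continuous f)
    (hf_int : Integrable f)
    (hF : ∀ x, F x = ∫ z in Set.Iic x, f z)
    (hF_bij : Set.BijOn F Set.univ (Set.Ioo (0:ℝ) 1))
    (hFinv' : ∀ y ∈ Set.Ioo (0:ℝ) 1, F (Finv y) = y)
    (hK_supp : ∀ u, u ∉ Set.Icc (-1:ℝ) 1 → K u = 0)
    (hK_int : Integrable K)
    (hκ : κ ∈ Set.Ioo (0:ℝ) 1)
    (hM : ∀ z ∈ Set.Icc (Finv ((1 - κ) * F (-Δ))) (Finv (κ + (1 - κ) * F Δ)),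
      |b z| ≤ M) :
    ∀ x ∈ Set.Icc (-Δ) Δ, ∀ h ∈ Set.Ioc (0:ℝ) (κ * min (F (-Δ)) (1 - F Δ)),
      (∫ z, |h⁻¹ * K ((F z - F x) / h)| * b z ^ 2 * f z)
        ≤ M ^ 2 * ∫ u, |K u| := by
  rintro x hx h ⟨hh₀, hh⟩
  have hF_deriv : ∀ t, HasDerivAt F (f t) t := fun t => by
    simpa only [← funext hF] using hasDerivAt_integral_Iic hf_int hf_cont.continuousAt
  have hF_mono : StrictMono F := strictMono_of_hasDerivAt_pos hF_deriv hf_pos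
  set g : ℝ → ℝ := fun t => |h⁻¹ * K ((t - F x) / h)|
  have hg_int : Integrable g :=
    (((hK_int.comp_div hh₀.ne').comp_sub_right (F x)).const_mul h⁻¹).abs
  have hb : ∀ z, g (F z) ≠ 0 → |b z| ≤ M := fun z hz => by
    have hK : K ((F z - F x) / h) ≠ 0 := fun h0 => hz (by simp [g, h0])
    have he₁ := one_sub_mul_mem_Ioo (Ioo_subset_Ico_self hκ) (hF_bij.mapsTo (mem_univ (-Δ)))
    have he₂ := add_one_sub_mul_mem_Ioo (Ioo_subset_Ico_self hκ) (hF_bij.mapsTo (mem_univ Δ))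
    refine hM z (hF_mono.mem_Icc_of_apply_mem_Icc (hFinv' _ he₁) (hFinv' _ he₂) ?_)
    exact mem_Icc_of_abs_sub_le hκ.1.le ⟨hF_mono.monotone hx.1, hF_mono.monotone hx.2⟩ hh
      (abs_le_of_comp_div_ne_zero hK_supp hh₀ hK)
  have hf_nonneg : ∀ z, 0 ≤ f z := fun z => (hf_pos z).le
  calc (∫ z, |h⁻¹ * K ((F z - F x) / h)| * b z ^ 2 * f z)
      ≤ M ^ 2 * ∫ z, g (F z) * f z :=
        integral_mul_sq_mul_le (fun _ => abs_nonneg _) hf_nonneg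
          (integrable_comp_mul_deriv (g := g) hF_deriv hF_mono.injective hf_nonneg hg_int) hb
    _ ≤ M ^ 2 * ∫ t, g t := mul_le_mul_of_nonneg_left
        (integral_comp_mul_deriv_le hF_deriv hF_mono.injective hf_nonneg hg_int
          fun _ => abs_nonneg _) (sq_nonneg M)
    _ = M ^ 2 * ∫ u, |K u| := by
        simp only [g, abs_mul, abs_inv, abs_of_pos hh₀]
        rw [integral_inv_mul_comp_sub_div (fun u => |K u|) hh₀]

/-- `∫ |K_h(F(z)-F(x))| b(z)² f(z) dz ≤ (sup_I |b|)² ‖K‖₁`. -/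
theorem warped_weighted_L1_bound (f K F Finv b : ℝ → ℝ) (Δ κ M : ℝ)
    (hf_pos : ∀ x, 0 < f x) (hf_cont : Continuous f)
    (hf_int : Integrable f) (hf_one : (∫ x, f x) = 1)
    (hF : ∀ x, F x = ∫ z in Set.Iic x, f z)
    (hF_bij : Set.BijOn F Set.univ (Set.Ioo (0:ℝ) 1))
    (hFinv : ∀ x, Finv (F x) = x)
    (hFinv' : ∀ y ∈ Set.Ioo (0:ℝ) 1, F (Finv y) = y)
    (hK_supp : ∀ u, u ∉ Set.Icc (-1:ℝ) 1 → K u = 0)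
    (hK_int : Integrable K)
    (hΔ : 0 < Δ) (hκ : κ ∈ Set.Ioo (0:ℝ) 1)
    (hM : ∀ z ∈ Set.Icc (Finv ((1 - κ) * F (-Δ))) (Finv (κ + (1 - κ) * F Δ)),
      |b z| ≤ M) :
    ∀ x ∈ Set.Icc (-Δ) Δ, ∀ h ∈ Set.Ioc (0:ℝ) (κ * min (F (-Δ)) (1 - F Δ)),
      (∫ z, |h⁻¹ * K ((F z - F x) / h)| * b z ^ 2 * f z)
        ≤ M ^ 2 * ∫ u, |K u| :=
  warped_weighted_L1_bound_general f K F Finv b Δ κ M hf_pos hf_cont hf_int hF hF_bij hFinv' hK_supp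
    hK_int hκ hM
end

section
/- Under the assumptions of Proposition 3 (f strictly positive continuous density with CDF F bijective onto (0,1) and f ≥ f₂ on [-Δ,Δ], f ≥ f₁ on I; K C¹ kernel with supp(K) = [-1,1]; δ kernel with supp(δ) = [-Δ,Δ], δ bounded; σ bounded; h ∈ (0, Δ₀]), there exists a constant c > 0 depending only on T, ‖K‖₁, ‖K'‖₂, ‖σ‖_∞, ‖f‖_∞, ‖δ‖_∞, f₁, f₂ such that for every continuous path φ : [0,T] → ℝ: ∫_ℝ Φ_h(φ,x)² δ(x) dx ≤ c / h³, where Φ_h(φ,x) := T⁻¹[ ∫_{φ(0)}^{φ(T)} K_h(F(z)-F(x)) dz − (2h²)⁻¹ ∫₀ᵀ K'((F(φ(t))-F(x))/h) σ(φ(t))² f(φ(t)) dt ]. -/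
/-!
The path-endpoint term is controlled pointwise: only the `z` with `|F z - F x| ≤ h` contribute,
and for `x ∈ [-Δ, Δ]` and `h ≤ Δ₀` these lie in `I`, where `f ≥ f₁`; inserting the factor
`f z / f₁ ≥ 1` and substituting `y = F z` bounds the term by `‖K‖₁ / f₁`. For the drift term,
Cauchy–Schwarz in time gives a factor `T ∫₀ᵀ K'(…)² dt`; integrating in `x` against `f`
and substituting `y = F x` for every fixed `t` yields `T² h ‖K'‖₂²`, hence `h⁻³` after the
prefactor `(2h²)⁻²`. Since `δ ≤ ‖δ‖_∞ ≤ (‖δ‖_∞ / f₂) f` on `[-Δ, Δ]`, the `δ`-weighted norm is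
bounded by these two estimates through `(a - b)² ≤ 2a² + 2b²`.
-/

open MeasureTheory Set
open scoped ENNReal

theorem lintegral_comp_sub_right_div (k : ℝ → ℝ≥0∞) (c : ℝ) {h : ℝ} (hh : 0 < h) :
    ∫⁻ y, k ((y - c) / h) = ENNReal.ofReal h * ∫⁻ u, k u := by
  have hsurj : Function.Surjective fun u : ℝ => c + h * u :=
    fun y => ⟨(y - c) / h, by field_simp; ring⟩
  have := lintegral_image_eq_lintegral_abs_deriv_mul MeasurableSet.univ
    (fun u _ => ((hasDerivAt_id' u).const_mul h).const_add c |>.hasDerivWithinAt)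
    (fun u _ v _ huv => by simpa [hh.ne'] using huv) (fun y => k ((y - c) / h))
  simp only [image_univ, hsurj.range_eq, Measure.restrict_univ, mul_one,
    abs_of_pos hh, add_sub_cancel_left, mul_div_cancel_left₀ _ hh.ne'] at this
  rw [this, lintegral_const_mul' _ _ ENNReal.ofReal_ne_top]

theorem lintegral_comp_sub_left_div (k : ℝ → ℝ≥0∞) (c : ℝ) {h : ℝ} (hh : 0 < h) :
    ∫⁻ y, k ((c - y) / h) = ENNReal.ofReal h * ∫⁻ u, k u := by
  calc ∫⁻ y, k ((c - y) / h) = ∫⁻ y, (fun u => k (-u)) ((y - c) / h) := by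
        simp only [← neg_div, neg_sub]
    _ = ENNReal.ofReal h * ∫⁻ u, k u := by
        rw [lintegral_comp_sub_right_div (fun u => k (-u)) c hh, lintegral_neg_eq_self]

theorem lintegral_abs_deriv_mul_comp_le {F f : ℝ → ℝ} (hF : ∀ x, HasDerivAt F (f x) x)
    (hinj : Function.Injective F) (k : ℝ → ℝ≥0∞) :
    ∫⁻ x, ENNReal.ofReal |f x| * k (F x) ≤ ∫⁻ y, k y := by
  have h := lintegral_image_eq_lintegral_abs_deriv_mul MeasurableSet.univ
    (fun x _ => (hF x).hasDerivWithinAt) hinj.injOn k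
  rw [Measure.restrict_univ] at h
  exact h ▸ setLIntegral_le_lintegral _ _

theorem lintegral_sq_le_measure_univ_mul {α : Type*} [MeasurableSpace α] (μ : Measure α)
    {g : α → ℝ≥0∞} (hg : AEMeasurable g μ) :
    (∫⁻ a, g a ∂μ) ^ 2 ≤ μ univ * ∫⁻ a, g a ^ 2 ∂μ := by
  have h := ENNReal.lintegral_mul_le_Lp_mul_Lq μ .two_two hg (aemeasurable_const (b := 1))
  simp only [Pi.mul_apply, mul_one, one_pow, lintegral_const, one_mul, ENNReal.rpow_two] at h
  calc (∫⁻ a, g a ∂μ) ^ 2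
      ≤ ((∫⁻ a, g a ^ 2 ∂μ) ^ (1 / 2 : ℝ) * μ univ ^ (1 / 2 : ℝ)) ^ 2 := by gcongr
    _ = μ univ * ∫⁻ a, g a ^ 2 ∂μ := by
      rw [mul_pow, ← ENNReal.rpow_natCast, ← ENNReal.rpow_natCast (_ ^ _), ← ENNReal.rpow_mul,
        ← ENNReal.rpow_mul]
      norm_num [mul_comm]

-- No integrability is needed: otherwise the Bochner integral is `0`.
theorem ofReal_sq_integral_le {α : Type*} [MeasurableSpace α] (μ : Measure α) (g : α → ℝ) :
    ENNReal.ofReal ((∫ a, g a ∂μ) ^ 2) ≤ μ univ * ∫⁻ a, ENNReal.ofReal (g a ^ 2) ∂μ := by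
  by_cases hg : AEStronglyMeasurable g μ
  · have hsq : ∀ x : ℝ, ENNReal.ofReal (x ^ 2) = ‖x‖ₑ ^ 2 := fun x => by
      rw [← sq_abs, ENNReal.ofReal_pow (abs_nonneg x), Real.enorm_eq_ofReal_abs]
    simp only [hsq]
    calc ‖∫ a, g a ∂μ‖ₑ ^ 2 ≤ (∫⁻ a, ‖g a‖ₑ ∂μ) ^ 2 := by
          gcongr; exact enorm_integral_le_lintegral_enorm g
      _ ≤ μ univ * ∫⁻ a, ‖g a‖ₑ ^ 2 ∂μ :=
          lintegral_sq_le_measure_univ_mul μ hg.enorm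
  · simp [integral_non_aestronglyMeasurable hg]

theorem lintegral_abs_mul_lintegral_comp_sub_div_le {α : Type*} [MeasurableSpace α]
    {μ : Measure α} [SFinite μ] {F f : ℝ → ℝ} (hF : ∀ x, HasDerivAt F (f x) x)
    (hinj : Function.Injective F) {k : ℝ → ℝ≥0∞} (hk : Measurable k) {g : α → ℝ}
    (hg : AEMeasurable g μ) {h : ℝ} (hh : 0 < h) :
    ∫⁻ x, ENNReal.ofReal |f x| * ∫⁻ t, k ((g t - F x) / h) ∂μ
      ≤ μ univ * (ENNReal.ofReal h * ∫⁻ u, k u) := by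
  have hFc : Continuous F := continuous_iff_continuousAt.2 fun x => (hF x).continuousAt
  have hfm : Measurable f := funext (fun x => (hF x).deriv) ▸ measurable_deriv F
  have hmeas : AEMeasurable (Function.uncurry fun x t => ENNReal.ofReal |f x| * k ((g t - F x) / h))
      (volume.prod μ) :=
    (hfm.abs.ennreal_ofReal.comp_aemeasurable measurable_fst.aemeasurable).mul
      (hk.comp_aemeasurable (((hg.comp_snd).sub
        (hFc.measurable.comp measurable_fst).aemeasurable).div_const h))
  calc ∫⁻ x, ENNReal.ofReal |f x| * ∫⁻ t, k ((g t - F x) / h) ∂μ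
      = ∫⁻ t, (∫⁻ x, ENNReal.ofReal |f x| * k ((g t - F x) / h)) ∂μ := by
        simp_rw [← lintegral_const_mul' _ _ ENNReal.ofReal_ne_top]
        exact lintegral_lintegral_swap hmeas
    _ ≤ ∫⁻ _, (ENNReal.ofReal h * ∫⁻ u, k u) ∂μ := by
        refine lintegral_mono fun t => ?_
        rw [← lintegral_comp_sub_left_div k (g t) hh]
        exact lintegral_abs_deriv_mul_comp_le hF hinj fun y => k ((g t - y) / h)
    _ = μ univ * (ENNReal.ofReal h * ∫⁻ u, k u) := by rw [lintegral_const, mul_comm]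

theorem abs_intervalIntegral_comp_sub_div_le {F f K : ℝ → ℝ} (hF : ∀ x, HasDerivAt F (f x) x)
    (hinj : Function.Injective F) (hK_supp : ∀ u, u ∉ Icc (-1 : ℝ) 1 → K u = 0)
    (hK : Integrable K) {f₁ h c : ℝ} (hf₁ : 0 < f₁) (hh : 0 < h)
    (hlb : ∀ z, |F z - c| ≤ h → f₁ ≤ f z) (a b : ℝ) :
    |∫ z in a..b, h⁻¹ * K ((F z - c) / h)| ≤ (∫ u, |K u|) / f₁ := by
  have hkey : ∀ z, ‖h⁻¹ * K ((F z - c) / h)‖ₑ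
      ≤ ENNReal.ofReal f₁⁻¹ * (ENNReal.ofReal |f z| * ‖h⁻¹ * K ((F z - c) / h)‖ₑ) := by
    intro z
    by_cases hz : K ((F z - c) / h) = 0
    · simp [hz]
    · have hzc : |F z - c| ≤ h := by
        have hu := not_imp_comm.1 (hK_supp _) hz
        rwa [mem_Icc, ← abs_le, abs_div, abs_of_pos hh, div_le_one hh] at hu
      have hfz : 1 ≤ ENNReal.ofReal f₁⁻¹ * ENNReal.ofReal |f z| := by
        rw [← ENNReal.ofReal_mul (by positivity), ENNReal.one_le_ofReal,
          le_inv_mul_iff₀ hf₁, mul_one]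
        exact (hlb z hzc).trans (le_abs_self _)
      calc ‖h⁻¹ * K ((F z - c) / h)‖ₑ = 1 * ‖h⁻¹ * K ((F z - c) / h)‖ₑ := (one_mul _).symm
        _ ≤ _ := by rw [← mul_assoc]; exact mul_le_mul' hfz le_rfl
  have hbound : ∫⁻ z, ‖h⁻¹ * K ((F z - c) / h)‖ₑ ≤ ENNReal.ofReal ((∫ u, |K u|) / f₁) := by
    calc ∫⁻ z, ‖h⁻¹ * K ((F z - c) / h)‖ₑ
        ≤ ∫⁻ z, ENNReal.ofReal f₁⁻¹ * (ENNReal.ofReal |f z| * ‖h⁻¹ * K ((F z - c) / h)‖ₑ) :=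
          lintegral_mono hkey
      _ ≤ ENNReal.ofReal f₁⁻¹ * ∫⁻ y, ‖h⁻¹ * K ((y - c) / h)‖ₑ := by
          rw [lintegral_const_mul' _ _ ENNReal.ofReal_ne_top]
          exact mul_le_mul' le_rfl (lintegral_abs_deriv_mul_comp_le hF hinj
            fun y => ‖h⁻¹ * K ((y - c) / h)‖ₑ)
      _ = ENNReal.ofReal ((∫ u, |K u|) / f₁) := by
          simp_rw [enorm_mul, lintegral_const_mul' _ _ enorm_ne_top]
          rw [lintegral_comp_sub_right_div (fun u => ‖K u‖ₑ) c hh,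
            ← ofReal_integral_norm_eq_lintegral_enorm hK, Real.enorm_of_nonneg (by positivity),
            ← ENNReal.ofReal_mul (by positivity), ← ENNReal.ofReal_mul (by positivity),
            ← ENNReal.ofReal_mul (by positivity)]
          congr 1
          simp only [Real.norm_eq_abs]
          field_simp
  rw [← Real.norm_eq_abs, intervalIntegral.norm_integral_eq_norm_integral_uIoc]
  refine (ENNReal.ofReal_le_ofReal_iff (by positivity)).1 ?_
  rw [ofReal_norm]
  exact (enorm_integral_le_lintegral_enorm _).trans ((setLIntegral_le_lintegral _ _).trans hbound)

theorem lintegral_abs_mul_sq_intervalIntegral_le {F f Kd w g : ℝ → ℝ} {M T h : ℝ}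
    (hF : ∀ x, HasDerivAt F (f x) x) (hinj : Function.Injective F) (hKd : Measurable Kd)
    (hg : AEMeasurable g (volume.restrict (Ioc 0 T))) (hw : ∀ t, |w t| ≤ M) (hT : 0 ≤ T)
    (hh : 0 < h) :
    ∫⁻ x, ENNReal.ofReal |f x| * ENNReal.ofReal ((∫ t in 0..T, Kd ((g t - F x) / h) * w t) ^ 2)
      ≤ ENNReal.ofReal (M ^ 2 * T ^ 2 * h) * ∫⁻ u, ENNReal.ofReal (Kd u ^ 2) := by
  have hM : 0 ≤ M := (abs_nonneg _).trans (hw 0)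
  have hpt : ∀ x, ENNReal.ofReal ((∫ t in 0..T, Kd ((g t - F x) / h) * w t) ^ 2)
      ≤ ENNReal.ofReal (M ^ 2 * T) *
        ∫⁻ t in Ioc 0 T, ENNReal.ofReal (Kd ((g t - F x) / h) ^ 2) := by
    intro x
    rw [intervalIntegral.integral_of_le hT]
    refine (ofReal_sq_integral_le _ _).trans ?_
    rw [Measure.restrict_apply_univ, Real.volume_Ioc, sub_zero, ENNReal.ofReal_mul (by positivity),
      mul_comm (ENNReal.ofReal (M ^ 2)), mul_assoc,
      ← lintegral_const_mul' (ENNReal.ofReal (M ^ 2)) _ ENNReal.ofReal_ne_top]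
    refine mul_le_mul' le_rfl (lintegral_mono fun t => ?_)
    rw [← ENNReal.ofReal_mul (by positivity), mul_pow, mul_comm (M ^ 2)]
    exact ENNReal.ofReal_le_ofReal (mul_le_mul_of_nonneg_left
      (sq_le_sq' (abs_le.1 (hw t)).1 (abs_le.1 (hw t)).2) (sq_nonneg _))
  calc ∫⁻ x, ENNReal.ofReal |f x| * ENNReal.ofReal ((∫ t in 0..T, Kd ((g t - F x) / h) * w t) ^ 2)
      ≤ ∫⁻ x, ENNReal.ofReal (M ^ 2 * T) * (ENNReal.ofReal |f x| *
          ∫⁻ t in Ioc 0 T, ENNReal.ofReal (Kd ((g t - F x) / h) ^ 2)) := by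
        refine lintegral_mono fun x => ?_
        rw [mul_left_comm]
        exact mul_le_mul' le_rfl (hpt x)
    _ ≤ ENNReal.ofReal (M ^ 2 * T) * (volume.restrict (Ioc 0 T) univ *
          (ENNReal.ofReal h * ∫⁻ u, ENNReal.ofReal (Kd u ^ 2))) := by
        rw [lintegral_const_mul' _ _ ENNReal.ofReal_ne_top]
        exact mul_le_mul' le_rfl (lintegral_abs_mul_lintegral_comp_sub_div_le hF hinj
          (hKd.pow_const 2).ennreal_ofReal hg hh)
    _ = ENNReal.ofReal (M ^ 2 * T ^ 2 * h) * ∫⁻ u, ENNReal.ofReal (Kd u ^ 2) := by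
        rw [Measure.restrict_apply_univ, Real.volume_Ioc, sub_zero, ← mul_assoc, ← mul_assoc,
          ← ENNReal.ofReal_mul (by positivity), ← ENNReal.ofReal_mul (by positivity)]
        ring_nf

theorem lintegral_mul_sq_drift_le {F f Kd σ φ : ℝ → ℝ} {Cσ Cf T h : ℝ}
    (hF : ∀ x, HasDerivAt F (f x) x) (hinj : Function.Injective F) (hf_pos : ∀ x, 0 < f x)
    (hf_le : ∀ x, f x ≤ Cf) (hσ : ∀ z, |σ z| ≤ Cσ) (hKd : Measurable Kd)
    (hKd_L2 : Integrable (fun u => Kd u ^ 2)) (hφ : ContinuousOn φ (Icc 0 T)) (hT : 0 ≤ T)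
    (hh : 0 < h) :
    ∫⁻ x, ENNReal.ofReal (f x) * ENNReal.ofReal (((2 * h ^ 2)⁻¹ *
        ∫ t in (0:ℝ)..T, Kd ((F (φ t) - F x) / h) * σ (φ t) ^ 2 * f (φ t)) ^ 2)
      ≤ ENNReal.ofReal ((Cσ ^ 2 * Cf) ^ 2 * T ^ 2 * (∫ u, Kd u ^ 2) / 4 / h ^ 3) := by
  have hw : ∀ z, |σ z ^ 2 * f z| ≤ Cσ ^ 2 * Cf := fun z => by
    rw [abs_of_nonneg (mul_nonneg (sq_nonneg _) (hf_pos z).le)]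
    exact mul_le_mul (sq_le_sq' (abs_le.1 (hσ z)).1 (abs_le.1 (hσ z)).2) (hf_le z)
      (hf_pos z).le (sq_nonneg _)
  have hg : AEMeasurable (fun t => F (φ t)) (volume.restrict (Ioc 0 T)) :=
    ((continuous_iff_continuousAt.2 fun x => (hF x).continuousAt).comp_continuousOn
      (hφ.mono Ioc_subset_Icc_self)).aemeasurable measurableSet_Ioc
  have hdrift := lintegral_abs_mul_sq_intervalIntegral_le hF hinj hKd hg (fun t => hw (φ t)) hT hh
  calc _ = ENNReal.ofReal ((2 * h ^ 2)⁻¹ ^ 2) * ∫⁻ x, ENNReal.ofReal |f x| * ENNReal.ofReal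
          ((∫ t in (0:ℝ)..T, Kd ((F (φ t) - F x) / h) * (σ (φ t) ^ 2 * f (φ t))) ^ 2) := by
        rw [← lintegral_const_mul' _ _ ENNReal.ofReal_ne_top]
        refine lintegral_congr fun x => ?_
        rw [abs_of_pos (hf_pos x), mul_pow, ENNReal.ofReal_mul (by positivity), mul_left_comm]
        simp only [mul_assoc]
    _ ≤ ENNReal.ofReal ((2 * h ^ 2)⁻¹ ^ 2) * (ENNReal.ofReal ((Cσ ^ 2 * Cf) ^ 2 * T ^ 2 * h) *
          ∫⁻ u, ENNReal.ofReal (Kd u ^ 2)) := mul_le_mul' le_rfl hdrift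
    _ = _ := by
        rw [← ofReal_integral_eq_lintegral_ofReal hKd_L2 (ae_of_all _ fun u => sq_nonneg _),
          ← ENNReal.ofReal_mul (by positivity), ← ENNReal.ofReal_mul (by positivity)]
        congr 1
        field_simp
        ring

theorem integral_sq_sub_mul_le {A B f δ : ℝ → ℝ} {a Δ α D f₂ β : ℝ}
    (hA : ∀ x ∈ Icc (-Δ) Δ, |A x| ≤ α)
    (hB : ∫⁻ x, ENNReal.ofReal (f x) * ENNReal.ofReal (B x ^ 2) ≤ ENNReal.ofReal β)
    (hδ_nonneg : ∀ x, 0 ≤ δ x) (hδ_le : ∀ x, δ x ≤ D)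
    (hδ_supp : ∀ x, x ∉ Icc (-Δ) Δ → δ x = 0)
    (hf₂ : 0 < f₂) (hf₂_lb : ∀ x ∈ Icc (-Δ) Δ, f₂ ≤ f x) (hΔ : 0 ≤ Δ) (hβ : 0 ≤ β) :
    ∫ x, (a * (A x - B x)) ^ 2 * δ x ≤ 2 * a ^ 2 * D * (2 * Δ * α ^ 2 + β / f₂) := by
  have hD : 0 ≤ D := (hδ_nonneg 0).trans (hδ_le 0)
  have hpt : ∀ x, ENNReal.ofReal ((a * (A x - B x)) ^ 2 * δ x)
      ≤ (Icc (-Δ) Δ).indicator (fun _ => ENNReal.ofReal (2 * a ^ 2 * D * α ^ 2)) x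
        + ENNReal.ofReal (2 * a ^ 2 * D / f₂)
          * (ENNReal.ofReal (f x) * ENNReal.ofReal (B x ^ 2)) := by
    intro x
    by_cases hx : x ∈ Icc (-Δ) Δ
    · have hfx : f₂ ≤ f x := hf₂_lb x hx
      have hAx : A x ^ 2 ≤ α ^ 2 := sq_le_sq' (abs_le.1 (hA x hx)).1 (abs_le.1 (hA x hx)).2
      have hδx : δ x * f₂ ≤ D * f x := mul_le_mul (hδ_le x) hfx hf₂.le hD
      have hf0 : 0 ≤ f x := hf₂.le.trans hfx
      rw [indicator_of_mem hx, ← ENNReal.ofReal_mul hf0, ← ENNReal.ofReal_mul (by positivity),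
        ← ENNReal.ofReal_add (by positivity) (by positivity)]
      refine ENNReal.ofReal_le_ofReal ?_
      have hsq : (A x - B x) ^ 2 ≤ 2 * A x ^ 2 + 2 * B x ^ 2 := by
        nlinarith [sq_nonneg (A x + B x)]
      calc (a * (A x - B x)) ^ 2 * δ x = a ^ 2 * ((A x - B x) ^ 2 * δ x) := by ring
        _ ≤ a ^ 2 * ((2 * A x ^ 2 + 2 * B x ^ 2) * δ x) := by gcongr; exact hδ_nonneg x
        _ = 2 * a ^ 2 * (A x ^ 2 * δ x) + 2 * a ^ 2 * (B x ^ 2 * δ x) := by ring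
        _ ≤ 2 * a ^ 2 * (α ^ 2 * D) + 2 * a ^ 2 * (B x ^ 2 * (D * f x / f₂)) := by
          gcongr
          · exact hδ_nonneg x
          · exact hδ_le x
          · exact (le_div_iff₀ hf₂).2 hδx
        _ = _ := by ring
    · simp [hδ_supp x hx]
  have hlint : ∫⁻ x, ENNReal.ofReal ((a * (A x - B x)) ^ 2 * δ x)
      ≤ ENNReal.ofReal (2 * a ^ 2 * D * (2 * Δ * α ^ 2 + β / f₂)) := by
    calc ∫⁻ x, ENNReal.ofReal ((a * (A x - B x)) ^ 2 * δ x)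
        ≤ ∫⁻ x, ((Icc (-Δ) Δ).indicator (fun _ => ENNReal.ofReal (2 * a ^ 2 * D * α ^ 2)) x
          + ENNReal.ofReal (2 * a ^ 2 * D / f₂)
            * (ENNReal.ofReal (f x) * ENNReal.ofReal (B x ^ 2))) := lintegral_mono hpt
      _ = ENNReal.ofReal (2 * a ^ 2 * D * α ^ 2) * volume (Icc (-Δ) Δ)
          + ENNReal.ofReal (2 * a ^ 2 * D / f₂)
            * ∫⁻ x, ENNReal.ofReal (f x) * ENNReal.ofReal (B x ^ 2) := by
        rw [lintegral_add_left (measurable_const.indicator measurableSet_Icc),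
          lintegral_indicator_const measurableSet_Icc,
          lintegral_const_mul' _ _ ENNReal.ofReal_ne_top]
      _ ≤ ENNReal.ofReal (2 * a ^ 2 * D * α ^ 2) * ENNReal.ofReal (2 * Δ)
          + ENNReal.ofReal (2 * a ^ 2 * D / f₂) * ENNReal.ofReal β := by
        rw [Real.volume_Icc, sub_neg_eq_add, ← two_mul]
        gcongr
      _ = _ := by
        rw [← ENNReal.ofReal_mul (by positivity), ← ENNReal.ofReal_mul (by positivity),
          ← ENNReal.ofReal_add (by positivity) (by positivity)]
        congr 1
        field_simp
  have hG : ∀ x, ‖(a * (A x - B x)) ^ 2 * δ x‖ₑ = ENNReal.ofReal ((a * (A x - B x)) ^ 2 * δ x) :=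
    fun x => Real.enorm_of_nonneg (mul_nonneg (sq_nonneg _) (hδ_nonneg x))
  refine (Real.le_norm_self _).trans ((ENNReal.ofReal_le_ofReal_iff (by positivity)).1 ?_)
  rw [ofReal_norm]
  exact (enorm_integral_le_lintegral_enorm _).trans ((lintegral_congr hG).trans_le hlint)

theorem hasDerivAt_of_eq_integral_Iic {F f : ℝ → ℝ} (hf_int : Integrable f)
    (hf_cont : Continuous f) (hF : ∀ x, F x = ∫ z in Iic x, f z) (x : ℝ) :
    HasDerivAt F (f x) x := by
  have hF0 : F = fun y => F 0 + ∫ t in (0 : ℝ)..y, f t := funext fun y => by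
    rw [hF, hF, ← intervalIntegral.integral_Iic_sub_Iic hf_int.integrableOn hf_int.integrableOn]
    ring
  rw [hF0]
  exact (intervalIntegral.integral_hasDerivAt_right hf_int.intervalIntegrable
    (hf_cont.stronglyMeasurableAtFilter _ _) hf_cont.continuousAt).const_add _

theorem mem_Icc_of_abs_sub_le_s16 {F Finv : ℝ → ℝ} (hF : StrictMono F)
    (hF01 : ∀ x, F x ∈ Ioo 0 1) (hFinv' : ∀ y ∈ Ioo (0 : ℝ) 1, F (Finv y) = y)
    {Δ κ h x z : ℝ} (hκ : κ ∈ Ioo 0 1) (hx : x ∈ Icc (-Δ) Δ)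
    (hh : h ≤ κ * min (F (-Δ)) (1 - F Δ)) (hz : |F z - F x| ≤ h) :
    z ∈ Icc (Finv ((1 - κ) * F (-Δ))) (Finv (κ + (1 - κ) * F Δ)) := by
  obtain ⟨hκ0, hκ1⟩ := hκ
  obtain ⟨hl0, hl1⟩ := hF01 (-Δ)
  obtain ⟨hr0, hr1⟩ := hF01 Δ
  have hxl := hF.monotone hx.1
  have hxr := hF.monotone hx.2
  have hhl : h ≤ κ * F (-Δ) := hh.trans (mul_le_mul_of_nonneg_left (min_le_left _ _) hκ0.le)
  have hhr : h ≤ κ * (1 - F Δ) := hh.trans (mul_le_mul_of_nonneg_left (min_le_right _ _) hκ0.le)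
  obtain ⟨hzl, hzr⟩ := abs_le.1 hz
  constructor
  · rw [← hF.le_iff_le, hFinv' _ ⟨by nlinarith, by nlinarith⟩]
    linarith
  · rw [← hF.le_iff_le, hFinv' _ ⟨by nlinarith, by nlinarith⟩]
    linarith

theorem Phi_sup_bound_general (f F Finv K Kd σ δ : ℝ → ℝ) (T Δ κ f₁ f₂ : ℝ)
    (hT : 0 < T)
    (hf_pos : ∀ x, 0 < f x) (hf_cont : Continuous f)
    (hf_int : Integrable f)
    (hf_bdd : ∃ C, ∀ x, f x ≤ C)
    (hF : ∀ x, F x = ∫ z in Set.Iic x, f z)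
    (hF_bij : Set.BijOn F Set.univ (Set.Ioo (0:ℝ) 1))
    (hFinv' : ∀ y ∈ Set.Ioo (0:ℝ) 1, F (Finv y) = y)
    (hK_deriv : ∀ u, HasDerivAt K (Kd u) u)
    (hK_supp : ∀ u, u ∉ Set.Icc (-1:ℝ) 1 → K u = 0)
    (hK_int : Integrable K) (hKd_L2 : Integrable (fun u => Kd u ^ 2))
    (hσ_bdd : ∃ C, ∀ z, |σ z| ≤ C)
    (hδ_nonneg : ∀ x, 0 ≤ δ x) (hδ_bdd : ∃ C, ∀ x, δ x ≤ C)
    (hδ_supp : ∀ x, x ∉ Set.Icc (-Δ) Δ → δ x = 0)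
    (hΔ : 0 < Δ) (hκ : κ ∈ Set.Ioo (0:ℝ) 1)
    (hf₁ : 0 < f₁)
    (hf₁_lb : ∀ z ∈ Set.Icc (Finv ((1 - κ) * F (-Δ))) (Finv (κ + (1 - κ) * F Δ)),
      f₁ ≤ f z)
    (hf₂ : 0 < f₂) (hf₂_lb : ∀ z ∈ Set.Icc (-Δ) Δ, f₂ ≤ f z) :
    ∃ c > 0, ∀ h ∈ Set.Ioc (0:ℝ) (κ * min (F (-Δ)) (1 - F Δ)),
      ∀ φ : ℝ → ℝ, ContinuousOn φ (Set.Icc 0 T) →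
        (∫ x, (T⁻¹ * ((∫ z in (φ 0)..(φ T), h⁻¹ * K ((F z - F x) / h))
            - (2 * h ^ 2)⁻¹ *
              ∫ t in (0:ℝ)..T,
                Kd ((F (φ t) - F x) / h) * σ (φ t) ^ 2 * f (φ t))) ^ 2 * δ x)
          ≤ c / h ^ 3 := by
  obtain ⟨Cf, hCf⟩ := hf_bdd
  obtain ⟨Cσ, hCσ⟩ := hσ_bdd
  obtain ⟨Cδ, hCδ⟩ := hδ_bdd
  have hFd := hasDerivAt_of_eq_integral_Iic hf_int hf_cont hF
  have hFmono : StrictMono F := strictMono_of_hasDerivAt_pos hFd hf_pos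
  have hF01 : ∀ x, F x ∈ Ioo 0 1 := fun x => hF_bij.mapsTo (mem_univ x)
  have hKd : Measurable Kd := funext (fun u => (hK_deriv u).deriv) ▸ measurable_deriv K
  set CA := (∫ u, |K u|) / f₁
  set CB := (Cσ ^ 2 * Cf) ^ 2 * T ^ 2 * (∫ u, Kd u ^ 2) / 4
  have hCB : 0 ≤ CB :=
    div_nonneg (mul_nonneg (by positivity) (integral_nonneg fun u => sq_nonneg _)) zero_le_four
  set c := 2 * T⁻¹ ^ 2 * Cδ * (2 * Δ * CA ^ 2 + CB / f₂)
  refine ⟨max c 1, lt_max_of_lt_right one_pos, fun h ⟨hh0, hhΔ⟩ φ hφ => ?_⟩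
  have hh3 : h ^ 3 ≤ 1 := pow_le_one₀ hh0.le <|
    (hhΔ.trans (mul_le_mul_of_nonneg_left (min_le_left _ _) hκ.1.le)).trans
      (mul_le_one₀ hκ.2.le (hF01 _).1.le (hF01 _).2.le)
  have hA : ∀ x ∈ Icc (-Δ) Δ, |∫ z in (φ 0)..(φ T), h⁻¹ * K ((F z - F x) / h)| ≤ CA :=
    fun x hx => abs_intervalIntegral_comp_sub_div_le hFd hFmono.injective hK_supp hK_int hf₁ hh0
      (fun z hz => hf₁_lb z (mem_Icc_of_abs_sub_le_s16 hFmono hF01 hFinv' hκ hx hhΔ hz)) _ _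
  have hB := lintegral_mul_sq_drift_le hFd hFmono.injective hf_pos hCf hCσ hKd hKd_L2 hφ hT.le hh0
  refine (integral_sq_sub_mul_le hA hB hδ_nonneg hCδ hδ_supp hf₂ hf₂_lb hΔ.le
    (div_nonneg hCB (by positivity))).trans ?_
  have hCδ0 : 0 ≤ Cδ := (hδ_nonneg 0).trans (hCδ 0)
  calc 2 * T⁻¹ ^ 2 * Cδ * (2 * Δ * CA ^ 2 + CB / h ^ 3 / f₂)
      ≤ 2 * T⁻¹ ^ 2 * Cδ * (2 * Δ * CA ^ 2 / h ^ 3 + CB / h ^ 3 / f₂) := by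
        gcongr
        exact le_div_self (by positivity) (by positivity) hh3
    _ = c / h ^ 3 := by ring
    _ ≤ max c 1 / h ^ 3 := div_le_div_of_nonneg_right (le_max_left _ _) (by positivity)

/-- Proposition 3.(1): `‖Φ_h(φ,·)‖_δ² ≤ c / h³` uniformly over
continuous paths `φ` and `h ∈ (0,Δ₀]`. -/
theorem Phi_sup_bound (f F Finv K Kd σ δ : ℝ → ℝ) (T Δ κ f₁ f₂ : ℝ)
    (hT : 0 < T)
    (hf_pos : ∀ x, 0 < f x) (hf_cont : Continuous f)
    (hf_int : Integrable f) (hf_one : (∫ x, f x) = 1)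
    (hf_bdd : ∃ C, ∀ x, f x ≤ C)
    (hF : ∀ x, F x = ∫ z in Set.Iic x, f z)
    (hF_bij : Set.BijOn F Set.univ (Set.Ioo (0:ℝ) 1))
    (hFinv : ∀ x, Finv (F x) = x)
    (hFinv' : ∀ y ∈ Set.Ioo (0:ℝ) 1, F (Finv y) = y)
    (hK_deriv : ∀ u, HasDerivAt K (Kd u) u)
    (hK_supp : ∀ u, u ∉ Set.Icc (-1:ℝ) 1 → K u = 0)
    (hK_int : Integrable K) (hKd_L2 : Integrable (fun u => Kd u ^ 2))
    (hσ_bdd : ∃ C, ∀ z, |σ z| ≤ C)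
    (hδ_nonneg : ∀ x, 0 ≤ δ x) (hδ_bdd : ∃ C, ∀ x, δ x ≤ C)
    (hδ_supp : ∀ x, x ∉ Set.Icc (-Δ) Δ → δ x = 0)
    (hΔ : 0 < Δ) (hκ : κ ∈ Set.Ioo (0:ℝ) 1)
    (hf₁ : 0 < f₁)
    (hf₁_lb : ∀ z ∈ Set.Icc (Finv ((1 - κ) * F (-Δ))) (Finv (κ + (1 - κ) * F Δ)),
      f₁ ≤ f z)
    (hf₂ : 0 < f₂) (hf₂_lb : ∀ z ∈ Set.Icc (-Δ) Δ, f₂ ≤ f z) :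
    ∃ c > 0, ∀ h ∈ Set.Ioc (0:ℝ) (κ * min (F (-Δ)) (1 - F Δ)),
      ∀ φ : ℝ → ℝ, ContinuousOn φ (Set.Icc 0 T) →
        (∫ x, (T⁻¹ * ((∫ z in (φ 0)..(φ T), h⁻¹ * K ((F z - F x) / h))
            - (2 * h ^ 2)⁻¹ *
              ∫ t in (0:ℝ)..T,
                Kd ((F (φ t) - F x) / h) * σ (φ t) ^ 2 * f (φ t))) ^ 2 * δ x)
          ≤ c / h ^ 3 :=
  Phi_sup_bound_general f F Finv K Kd σ δ T Δ κ f₁ f₂ hT hf_pos hf_cont hf_int hf_bdd hF hF_bij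
    hFinv' hK_deriv hK_supp hK_int hKd_L2 hσ_bdd hδ_nonneg hδ_bdd hδ_supp hΔ hκ hf₁ hf₁_lb hf₂
    hf₂_lb
end
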